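/- Rodrigues formula: for H_k a harmonic homogeneous polynomial of degree k in m variables, CH_{2t}(H_k) = e^{|x|²} (−Δ)^t (e^{−|x|²} H_k), where CH_{2t}(H_k) = (−Δ − 4|x|² + 4𝔼 + 2m)^t H_k. -/

import Mathlib

/-- The Laplacian `Δf = ∑ ∂²f/∂x_i²` on functions `ℝ^m → ℝ`. -/
noncomputable def lapF (m : ℕ) (f : (Fin m → ℝ) → ℝ) (x : Fin m → ℝ) : ℝ :=
  ∑ i : Fin m, fderiv ℝ (fun y => fderiv ℝ f y (Pi.single i 1)) x (Pi.single i 1)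

/-- The Euler operator `𝔼f = ∑ x_i ∂f/∂x_i`. -/
noncomputable def eulerF (m : ℕ) (f : (Fin m → ℝ) → ℝ) (x : Fin m → ℝ) : ℝ :=
  ∑ i : Fin m, x i * fderiv ℝ f x (Pi.single i 1)

/-- The squared norm `|x|² = ∑ x_i²`. -/
def nsqF (m : ℕ) (x : Fin m → ℝ) : ℝ := ∑ i : Fin m, x i ^ 2

open MvPolynomial

/-- The Laplacian `Δ = ∑ ∂_{x_i}²` on polynomials in `m` variables. -/
noncomputable def lap (m : ℕ) : Module.End ℝ (MvPolynomial (Fin m) ℝ) :=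
  ∑ i : Fin m, ((pderiv i).toLinearMap * (pderiv i).toLinearMap)

/-- The Euler operator `𝔼 = ∑ x_i ∂_{x_i}`. -/
noncomputable def euler (m : ℕ) : Module.End ℝ (MvPolynomial (Fin m) ℝ) :=
  ∑ i : Fin m, (LinearMap.mulLeft ℝ (X i) * (pderiv i).toLinearMap)

/-- Multiplication by `|x|² = ∑ x_i²`. -/
noncomputable def nsqOp (m : ℕ) : Module.End ℝ (MvPolynomial (Fin m) ℝ) :=
  LinearMap.mulLeft ℝ (∑ i : Fin m, X i ^ 2)

/-- The scalar operator `D_+² = −Δ − 4|x|² + 4𝔼 + 2m`. -/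
noncomputable def Dplus2 (m : ℕ) : Module.End ℝ (MvPolynomial (Fin m) ℝ) :=
  -lap m - (4 : ℝ) • nsqOp m + (4 : ℝ) • euler m + ((2 * m : ℕ) : ℝ) • 1

/-!
Conjugation by the Gaussian turns `∂ᵢ` into `e^{|x|²} ∂ᵢ e^{-|x|²} = ∂ᵢ - 2xᵢ`, hence
`e^{|x|²} (-Δ) e^{-|x|²} = -∑ᵢ (∂ᵢ - 2xᵢ)² = -Δ - 4|x|² + 4𝔼 + 2m` on every polynomial. So
`P ↦ e^{-|x|²} P` intertwines `D_+²` with `-Δ`, and the formula follows by iterating `t` times.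
-/

namespace MvPolynomial

variable {σ : Type*} [Fintype σ] [DecidableEq σ]

theorem hasFDerivAt_eval (P : MvPolynomial σ ℝ) (x : σ → ℝ) :
    HasFDerivAt (fun y => eval y P)
      (∑ i, eval x (pderiv i P) • (ContinuousLinearMap.proj i : (σ → ℝ) →L[ℝ] ℝ)) x := by
  induction P using MvPolynomial.induction_on with
  | C a =>
    simp only [eval_C, pderiv_C, map_zero, zero_smul, Finset.sum_const_zero]
    exact hasFDerivAt_const a x
  | add p q hp hq =>
    simp only [map_add, add_smul, Finset.sum_add_distrib]
    exact hp.add hq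
  | mul_X p n hp =>
    simp only [map_mul, eval_X]
    refine (hp.mul (hasFDerivAt_apply n x)).congr_fderiv ?_
    ext v
    simp [Pi.single_apply, apply_ite (eval x), Finset.sum_add_distrib, add_mul, Finset.mul_sum,
      mul_assoc]

theorem pderiv_sum_X_sq {R : Type*} [CommSemiring R] (i : σ) :
    pderiv i (∑ j, X j ^ 2 : MvPolynomial σ R) = 2 * X i := by
  simp [pderiv_X, Pi.single_apply]

/-- `e^{-Q} ∂ᵢ e^Q`, acting on polynomials. -/
noncomputable def expConjPDeriv (Q : MvPolynomial σ ℝ) (i : σ) (P : MvPolynomial σ ℝ) :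
    MvPolynomial σ ℝ :=
  pderiv i P + pderiv i Q * P

theorem fderiv_exp_mul_eval_apply_single (Q P : MvPolynomial σ ℝ) (x : σ → ℝ) (i : σ) :
    fderiv ℝ (fun y => Real.exp (eval y Q) * eval y P) x (Pi.single i 1) =
      Real.exp (eval x Q) * eval x (expConjPDeriv Q i P) := by
  have h : HasFDerivAt (fun y => Real.exp (eval y Q) * eval y P) _ x :=
    (hasFDerivAt_eval Q x).exp.mul (hasFDerivAt_eval P x)
  rw [h.fderiv]
  simp only [add_apply, smul_apply, sum_apply, ContinuousLinearMap.proj_apply, Pi.single_apply,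
    smul_eq_mul, mul_ite, mul_one, mul_zero, Finset.sum_ite_eq', Finset.mem_univ, if_true, expConjPDeriv,
    map_add, map_mul]
  ring

end MvPolynomial

theorem lapF_exp_mul_eval (m : ℕ) (Q P : MvPolynomial (Fin m) ℝ) :
    lapF m (fun y => Real.exp (eval y Q) * eval y P) =
      fun x => Real.exp (eval x Q) * eval x (∑ i, expConjPDeriv Q i (expConjPDeriv Q i P)) := by
  funext x
  simp only [lapF, fderiv_exp_mul_eval_apply_single, map_sum, Finset.mul_sum]

theorem eval_sum_X_sq (m : ℕ) (x : Fin m → ℝ) : eval x (∑ i, X i ^ 2) = nsqF m x := by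
  simp [nsqF]

theorem Dplus2_apply (m : ℕ) (P : MvPolynomial (Fin m) ℝ) :
    Dplus2 m P =
      ∑ i, (-pderiv i (pderiv i P) - 4 * X i ^ 2 * P + 4 * X i * pderiv i P + 2 * P) := by
  simp only [Dplus2, lap, nsqOp, euler, Nat.cast_mul, Nat.cast_ofNat, LinearMap.add_apply,
    LinearMap.sub_apply, LinearMap.neg_apply, LinearMap.coe_sum, Finset.sum_apply,
    Module.End.mul_apply, Derivation.coeFn_coe, LinearMap.smul_apply, LinearMap.mulLeft_apply,
    Finset.sum_mul, smul_eq_C_mul, map_ofNat, Finset.mul_sum, Module.End.one_apply, C_mul,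
    map_natCast, mul_assoc, Finset.sum_add_distrib, Finset.sum_sub_distrib, Finset.sum_neg_distrib,
    Finset.sum_const, Finset.card_univ, Fintype.card_fin, nsmul_eq_mul]
  ring

theorem sum_expConjPDeriv_twice_neg_sum_X_sq (m : ℕ) (P : MvPolynomial (Fin m) ℝ) :
    ∑ i, expConjPDeriv (-∑ j, X j ^ 2) i (expConjPDeriv (-∑ j, X j ^ 2) i P) = -Dplus2 m P := by
  rw [Dplus2_apply, eq_neg_iff_add_eq_zero, ← Finset.sum_add_distrib]
  refine Finset.sum_eq_zero fun i _ => ?_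
  have hpderiv_two : pderiv i (2 : MvPolynomial (Fin m) ℝ) = 0 := by
    simpa using (pderiv i).map_natCast 2
  simp only [expConjPDeriv, map_neg, map_add, pderiv_sum_X_sq, pderiv_mul, pderiv_X_self,
    hpderiv_two]
  ring

theorem lapF_gaussian_mul_eval (m : ℕ) (P : MvPolynomial (Fin m) ℝ) :
    lapF m (fun y => Real.exp (-nsqF m y) * eval y P) =
      fun x => -(Real.exp (-nsqF m x) * eval x (Dplus2 m P)) := by
  have h := lapF_exp_mul_eval m (-∑ j, X j ^ 2) P
  simp only [map_neg, eval_sum_X_sq, sum_expConjPDeriv_twice_neg_sum_X_sq, mul_neg] at h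
  exact h

theorem semiconj_gaussian_mul_eval (m : ℕ) :
    Function.Semiconj (fun P y => Real.exp (-nsqF m y) * eval y P) (Dplus2 m)
      (fun g y => -lapF m g y) := fun P => by
  simp only [lapF_gaussian_mul_eval, neg_neg]

theorem rodrigues_formula_general (m t : ℕ) (H : MvPolynomial (Fin m) ℝ) (x : Fin m → ℝ) :
    eval x ((Dplus2 m ^ t) H) =
      Real.exp (nsqF m x) *
        ((fun g => fun y => -lapF m g y)^[t]
          (fun y => Real.exp (-(nsqF m y)) * eval y H) x) := by
  rw [← ((semiconj_gaussian_mul_eval m).iterate_right t).eq H, Module.End.pow_apply, ← mul_assoc,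
    ← Real.exp_add, add_neg_cancel, Real.exp_zero, one_mul]

theorem rodrigues_formula (m k t : ℕ) (H : MvPolynomial (Fin m) ℝ)
    (hH : H.IsHomogeneous k) (hharm : lap m H = 0) (x : Fin m → ℝ) :
    eval x ((Dplus2 m ^ t) H) =
      Real.exp (nsqF m x) *
        ((fun g => fun y => -lapF m g y)^[t]
          (fun y => Real.exp (-(nsqF m y)) * eval y H) x) :=
  rodrigues_formula_general m t H x
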